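/- Fix n ∈ ℝ and Ī ∈ ℝ such that Ī − ḡ_K·(Ē_Na − Ē_K)·n⁴ − ḡ_L·(Ē_Na − Ē_L) ≠ 0. Then |η(v,n)| tends to +∞ as v tends to Ē_Na from the left within (Ē_K, Ē_Na); that is, the plane {v = Ē_Na} is a vertical asymptote of the graph h = η(v,n) of the critical manifold. -/

import Mathlib

open Real Set Filter

noncomputable section

/-- Nernst potential of sodium (rescaled). -/
def ENa : ℝ := 0.5
/-- Nernst potential of potassium (rescaled). -/
def EK : ℝ := -0.77
/-- Nernst potential of the leak current (rescaled). -/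
def EL : ℝ := -0.544
/-- Rescaled potassium conductance. -/
def gK : ℝ := 0.3
/-- Rescaled leak conductance. -/
def gL : ℝ := 0.0025

/-- The right-hand side of the fast voltage equation. -/
def V (I v m h n : ℝ) : ℝ :=
  I - (v - ENa) * m ^ 3 * h - gK * (v - EK) * n ^ 4 - gL * (v - EL)

def αm (v : ℝ) : ℝ := ((v + 40) / 10) / (1 - Real.exp (-(v + 40) / 10))
def βm (v : ℝ) : ℝ := 4 * Real.exp (-(v + 65) / 18)
def αh (v : ℝ) : ℝ := (7 / 100) * Real.exp (-(v + 65) / 20)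
def βh (v : ℝ) : ℝ := 1 / (1 + Real.exp (-(v + 35) / 10))
def αn (v : ℝ) : ℝ := ((v + 55) / 100) / (1 - Real.exp (-(v + 55) / 10))
def βn (v : ℝ) : ℝ := (1 / 4) * Real.exp (-(v + 65) / 80)

def minf (v : ℝ) : ℝ := αm v / (αm v + βm v)
def hinf (v : ℝ) : ℝ := αh v / (αh v + βh v)
def ninf (v : ℝ) : ℝ := αn v / (αn v + βn v)
def tmhat (v : ℝ) : ℝ := 1 / (αm v + βm v)
def thhat (v : ℝ) : ℝ := 1 / (αh v + βh v)
def tnhat (v : ℝ) : ℝ := 1 / (αn v + βn v)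

/-- The real, sign-preserving cube root: `cbrt s = sign s * |s| ^ (1/3)`. -/
def cbrt (s : ℝ) : ℝ := Real.sign s * |s| ^ ((1 : ℝ) / 3)

/-- Graph representation `m = μ(v,h,n)` of the critical manifold. -/
def μfun (I v h n : ℝ) : ℝ :=
  cbrt ((I - gK * (v - EK) * n ^ 4 - gL * (v - EL)) / ((v - ENa) * h))

/-- Graph representation `h = η(v,n)` of the two-dimensional critical manifold. -/
def ηfun (I v n : ℝ) : ℝ :=
  (I - gK * (v - EK) * n ^ 4 - gL * (v - EL)) / ((v - ENa) * (minf v) ^ 3)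

/-- Graph representation `n = ν(v,h)` of the two-dimensional critical manifold
(nonnegative real fourth root). -/
def νfun (I v h : ℝ) : ℝ :=
  ((I - (v - ENa) * (minf v) ^ 3 * h - gL * (v - EL)) / (gK * (v - EK))) ^ ((1 : ℝ) / 4)

/-- `H(v,h) = (h_∞(v) - h)/(T_h · t̂_h(v))`. -/
def Hfun (Th v h : ℝ) : ℝ := (hinf v - h) / (Th * thhat v)

/-- `N(v,n) = (n_∞(v) - n)/(T_n · t̂_n(v))`. -/
def Nfun (Tn v n : ℝ) : ℝ := (ninf v - n) / (Tn * tnhat v)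

open Topology

lemma Filter.Tendsto.norm_div_atTop {α 𝕜 : Type*} [NormedDivisionRing 𝕜] {l : Filter α}
    {f g : α → 𝕜} {c : 𝕜} (hc : c ≠ 0) (hf : Tendsto f l (𝓝 c)) (hg : Tendsto g l (𝓝[≠] 0)) :
    Tendsto (fun x => ‖f x / g x‖) l atTop := by
  simp only [div_eq_mul_inv, norm_mul]
  exact hf.norm.pos_mul_atTop (norm_pos_iff.mpr hc) (tendsto_norm_inv_nhdsNE_zero_atTop.comp hg)

lemma αm_pos {v : ℝ} (hv : -40 < v) : 0 < αm v := by
  have : Real.exp (-(v + 40) / 10) < 1 := Real.exp_lt_one_iff.mpr (by linarith)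
  exact div_pos (by linarith) (by linarith)

lemma βm_pos (v : ℝ) : 0 < βm v := by
  unfold βm; positivity

lemma minf_pos {v : ℝ} (hv : -40 < v) : 0 < minf v :=
  div_pos (αm_pos hv) (add_pos (αm_pos hv) (βm_pos v))

lemma continuousAt_αm {v : ℝ} (hv : -40 < v) : ContinuousAt αm v := by
  have : Real.exp (-(v + 40) / 10) < 1 := Real.exp_lt_one_iff.mpr (by linarith)
  exact ContinuousAt.div (by fun_prop) (by fun_prop) (by linarith)

lemma continuousAt_minf {v : ℝ} (hv : -40 < v) : ContinuousAt minf v :=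
  (continuousAt_αm hv).div ((continuousAt_αm hv).add (by unfold βm; fun_prop))
    (add_pos (αm_pos hv) (βm_pos v)).ne'

lemma tendsto_sub_ENa_mul_minf_pow_nhdsNE_zero :
    Tendsto (fun v => (v - ENa) * minf v ^ 3) (𝓝[Ioo EK ENa] ENa) (𝓝[≠] 0) := by
  have hENa : (-40 : ℝ) < ENa := by norm_num [ENa]
  have hEK : (-40 : ℝ) < EK := by norm_num [EK]
  refine tendsto_nhdsWithin_of_tendsto_nhds_of_eventually_within _ ?_ ?_
  · have : ContinuousAt (fun v => (v - ENa) * minf v ^ 3) ENa :=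
      (continuousAt_id.sub continuousAt_const).mul ((continuousAt_minf hENa).pow 3)
    simpa using this.tendsto.mono_left nhdsWithin_le_nhds
  · filter_upwards [self_mem_nhdsWithin] with v hv
    exact mul_ne_zero (sub_ne_zero.mpr hv.2.ne) (pow_ne_zero 3 (minf_pos (hEK.trans hv.1)).ne')

/-- the plane `{v = Ē_Na}` is a vertical asymptote of the graph
`h = η(v,n)`: `|η(v,n)| → +∞` as `v → Ē_Na⁻` within `(Ē_K, Ē_Na)`. -/
theorem stmt18 (I n : ℝ)
    (hnum : I - gK * (ENa - EK) * n ^ 4 - gL * (ENa - EL) ≠ 0) :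
    Filter.Tendsto (fun v => |ηfun I v n|)
      (nhdsWithin ENa (Set.Ioo EK ENa)) Filter.atTop := by
  have hnumerator : Tendsto (fun v => I - gK * (v - EK) * n ^ 4 - gL * (v - EL))
      (𝓝[Ioo EK ENa] ENa) (𝓝 (I - gK * (ENa - EK) * n ^ 4 - gL * (ENa - EL))) :=
    ((continuous_const.sub (by fun_prop)).sub (by fun_prop)).continuousAt.tendsto.mono_left
      nhdsWithin_le_nhds
  simpa only [ηfun, Real.norm_eq_abs] using
    hnumerator.norm_div_atTop hnum tendsto_sub_ENa_mul_minf_pow_nhdsNE_zero
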